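/- Partial μ-τ reflection symmetry in the first column: the condition |U_{μ1}| = |U_{τ1}| in the standard PMNS parametrization is equivalent to cos δ_CP = (c₂₃² - s₂₃²)(c₁₂²s₁₃² - s₁₂²) / (4 c₁₂ s₁₂ c₂₃ s₂₃ s₁₃), provided the denominator is nonzero. -/

import Mathlib

/-! Since `|a - b e^{iδ}|² = a² + b² - 2ab cos δ` for real `a`, `b`, the difference
`|U_{μ1}|² - |U_{τ1}|²` is affine in `cos δ` with slope `4 c₁₂ s₁₂ c₂₃ s₂₃ s₁₃ ≠ 0`, so it vanishes
for exactly one value of `cos δ`. -/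

open Complex

lemma norm_sub_mul_exp_mul_I_sq (a b δ : ℝ) :
    ‖(a : ℂ) - b * exp (δ * I)‖ ^ 2 = a ^ 2 + b ^ 2 - 2 * a * b * Real.cos δ := by
  rw [Complex.sq_norm, exp_mul_I, ← ofReal_cos, ← ofReal_sin, normSq_apply]
  simp only [sub_re, sub_im, mul_re, mul_im, add_re, add_im, ofReal_re, ofReal_im, I_re, I_im]
  linear_combination b ^ 2 * Real.sin_sq_add_cos_sq δ

lemma norm_sq_sub_norm_sq_first_column (c₁₂ s₁₂ c₂₃ s₂₃ s₁₃ δ : ℝ) :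
    ‖(-(s₁₂ * c₂₃ : ℝ) - (c₁₂ * s₂₃ * s₁₃ : ℝ) * exp (δ * I) : ℂ)‖ ^ 2 -
        ‖((s₁₂ * s₂₃ : ℝ) - (c₁₂ * c₂₃ * s₁₃ : ℝ) * exp (δ * I) : ℂ)‖ ^ 2 =
      4 * c₁₂ * s₁₂ * c₂₃ * s₂₃ * s₁₃ * Real.cos δ -
        (c₂₃ ^ 2 - s₂₃ ^ 2) * (c₁₂ ^ 2 * s₁₃ ^ 2 - s₁₂ ^ 2) := by
  rw [← ofReal_neg, norm_sub_mul_exp_mul_I_sq, norm_sub_mul_exp_mul_I_sq]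
  ring

theorem partial_mutau_first_column (θ12 θ13 θ23 δ : ℝ)
    (hne : Real.cos θ12 * Real.sin θ12 * Real.cos θ23 * Real.sin θ23 * Real.sin θ13 ≠ 0) :
    ‖(-(Real.sin θ12 * Real.cos θ23 : ℝ) -
        (Real.cos θ12 * Real.sin θ23 * Real.sin θ13 : ℝ) * Complex.exp ((δ : ℂ) * Complex.I) : ℂ)‖ ^ 2 =
      ‖((Real.sin θ12 * Real.sin θ23 : ℝ) -
        (Real.cos θ12 * Real.cos θ23 * Real.sin θ13 : ℝ) * Complex.exp ((δ : ℂ) * Complex.I) : ℂ)‖ ^ 2 ↔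
    Real.cos δ =
      (Real.cos θ23 ^ 2 - Real.sin θ23 ^ 2) *
          (Real.cos θ12 ^ 2 * Real.sin θ13 ^ 2 - Real.sin θ12 ^ 2) /
        (4 * Real.cos θ12 * Real.sin θ12 * Real.cos θ23 * Real.sin θ23 * Real.sin θ13) := by
  have hden : 4 * Real.cos θ12 * Real.sin θ12 * Real.cos θ23 * Real.sin θ23 * Real.sin θ13 ≠ 0 := by
    simpa only [mul_assoc] using mul_ne_zero four_ne_zero (by simpa only [mul_assoc] using hne)
  rw [← sub_eq_zero, norm_sq_sub_norm_sq_first_column, sub_eq_zero, eq_div_iff hden, mul_comm]
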